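/- Let A₂ = [[5, 2], [2, 1]] and A₃ = [[5, 1], [4, 1]]. Then A₂ and A₃ have the same characteristic polynomial t² − 6t + 1 (the Alexander polynomial Δ_{A₂}(t) = Δ_{A₃}(t) = t² − 6t + 1), but there is no matrix B ∈ GL₂(ℤ) with A₃ = B A₂ B⁻¹; indeed the groups ℤ²/(I − A₂ᵗ)ℤ² ≅ ℤ/2ℤ × ℤ/2ℤ and ℤ²/(I − A₃ᵗ)ℤ² ≅ ℤ/4ℤ are not isomorphic. -/
import Mathlib


open Polynomial

/-- The cokernel `ℤⁿ/Mℤⁿ` of the ℤ-linear map `ℤⁿ → ℤⁿ` given by an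
integer matrix `M`. -/
abbrev cokernel {n : ℕ} (M : Matrix (Fin n) (Fin n) ℤ) : Type :=
  (Fin n → ℤ) ⧸ LinearMap.range M.mulVecLin

/-- The matrix `A₂ = [[5, 2], [2, 1]]`. -/
def A2 : Matrix (Fin 2) (Fin 2) ℤ := !![5, 2; 2, 1]

/-- The matrix `A₃ = [[5, 1], [4, 1]]`. -/
def A3 : Matrix (Fin 2) (Fin 2) ℤ := !![5, 1; 4, 1]

/-- Transfer a cokernel along a linear map with the same kernel. -/
noncomputable def cokerEquiv {M : Matrix (Fin 2) (Fin 2) ℤ} {G : Type} [AddCommGroup G]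
    [Module ℤ G] (f : (Fin 2 → ℤ) →ₗ[ℤ] G)
    (h : LinearMap.range M.mulVecLin = LinearMap.ker f)
    (hs : Function.Surjective f) : cokernel M ≃+ G :=
  ((Submodule.quotEquivOfEq _ _ h).trans (f.quotKerEquivOfSurjective hs)).toAddEquiv

def f2 : (Fin 2 → ℤ) →ₗ[ℤ] ZMod 2 × ZMod 2 where
  toFun v := ((v 0 : ZMod 2), (v 1 : ZMod 2))
  map_add' v w := by simp [Prod.ext_iff]
  map_smul' c v := by simp [Prod.ext_iff]

def f3 : (Fin 2 → ℤ) →ₗ[ℤ] ZMod 4 where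
  toFun v := (v 0 : ZMod 4)
  map_add' v w := by simp
  map_smul' c v := by simp

lemma hM2 : (1 : Matrix (Fin 2) (Fin 2) ℤ) - A2.transpose = !![-4, -2; -2, 0] := by
  ext i j
  fin_cases i <;> fin_cases j <;>
    simp [A2, Matrix.one_apply, Matrix.transpose_apply, Matrix.vecHead, Matrix.vecTail]

lemma hM3 : (1 : Matrix (Fin 2) (Fin 2) ℤ) - A3.transpose = !![-4, -4; -1, 0] := by
  ext i j
  fin_cases i <;> fin_cases j <;>
    simp [A3, Matrix.one_apply, Matrix.transpose_apply, Matrix.vecHead, Matrix.vecTail]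

lemma coker2 : Nonempty (cokernel (1 - A2.transpose) ≃+ (ZMod 2 × ZMod 2)) := by
  refine ⟨cokerEquiv f2 ?_ ?_⟩
  · ext x
    simp only [LinearMap.mem_range, LinearMap.mem_ker, Matrix.mulVecLin_apply, hM2]
    constructor
    · rintro ⟨v, rfl⟩
      have h0 : (!![-4, -2; -2, 0] : Matrix (Fin 2) (Fin 2) ℤ).mulVec v 0 = -4 * v 0 - 2 * v 1 := by
        simp [Matrix.mulVec, dotProduct, Fin.sum_univ_two]; try ring
      have h1 : (!![-4, -2; -2, 0] : Matrix (Fin 2) (Fin 2) ℤ).mulVec v 1 = -2 * v 0 := by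
        simp [Matrix.mulVec, dotProduct, Fin.sum_univ_two]; try ring
      simp only [f2, LinearMap.coe_mk, AddHom.coe_mk, h0, h1, Prod.mk_eq_zero]
      constructor
      · rw [ZMod.intCast_zmod_eq_zero_iff_dvd]; exact ⟨-2 * v 0 - v 1, by ring⟩
      · rw [ZMod.intCast_zmod_eq_zero_iff_dvd]; exact ⟨-v 0, by ring⟩
    · intro hx
      simp only [f2, LinearMap.coe_mk, AddHom.coe_mk, Prod.mk_eq_zero,
        ZMod.intCast_zmod_eq_zero_iff_dvd] at hx
      obtain ⟨⟨a, ha⟩, b, hb⟩ := hx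
      refine ⟨![-b, 2 * b - a], funext fun i => ?_⟩
      fin_cases i <;>
        simp [Matrix.mulVec, dotProduct, Fin.sum_univ_two] <;> omega
  · rintro ⟨a, b⟩
    obtain ⟨x, hx⟩ := ZMod.intCast_surjective (n := 2) a
    obtain ⟨y, hy⟩ := ZMod.intCast_surjective (n := 2) b
    exact ⟨![x, y], by simp [f2, hx, hy]⟩

lemma coker3 : Nonempty (cokernel (1 - A3.transpose) ≃+ ZMod 4) := by
  refine ⟨cokerEquiv f3 ?_ ?_⟩
  · ext x
    simp only [LinearMap.mem_range, LinearMap.mem_ker, Matrix.mulVecLin_apply, hM3]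
    constructor
    · rintro ⟨v, rfl⟩
      have h0 : (!![-4, -4; -1, 0] : Matrix (Fin 2) (Fin 2) ℤ).mulVec v 0 = -4 * v 0 - 4 * v 1 := by
        simp [Matrix.mulVec, dotProduct, Fin.sum_univ_two]; try ring
      simp only [f3, LinearMap.coe_mk, AddHom.coe_mk, h0]
      rw [ZMod.intCast_zmod_eq_zero_iff_dvd]; exact ⟨-v 0 - v 1, by ring⟩
    · intro hx
      simp only [f3, LinearMap.coe_mk, AddHom.coe_mk,
        ZMod.intCast_zmod_eq_zero_iff_dvd] at hx
      obtain ⟨a, ha⟩ := hx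
      refine ⟨![-x 1, -a + x 1], funext fun i => ?_⟩
      fin_cases i <;>
        simp [Matrix.mulVec, dotProduct, Fin.sum_univ_two] <;> omega
  · intro a
    obtain ⟨x, hx⟩ := ZMod.intCast_surjective (n := 4) a
    exact ⟨![x, 0], by simp [f3, hx]⟩

theorem alexander_same_but_not_similar :
    A2.charpoly = X ^ 2 - 6 * X + 1 ∧
    A3.charpoly = X ^ 2 - 6 * X + 1 ∧
    (¬ ∃ B : GL (Fin 2) ℤ, A3 = (B : Matrix (Fin 2) (Fin 2) ℤ) * A2 *
      ((B⁻¹ : GL (Fin 2) ℤ) : Matrix (Fin 2) (Fin 2) ℤ)) ∧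
    Nonempty (cokernel (1 - A2.transpose) ≃+ (ZMod 2 × ZMod 2)) ∧
    Nonempty (cokernel (1 - A3.transpose) ≃+ ZMod 4) ∧
    IsEmpty (cokernel (1 - A2.transpose) ≃+ cokernel (1 - A3.transpose)) := by
  refine ⟨?_, ?_, ?_, coker2, coker3, ?_⟩
  · simp [Matrix.charpoly, Matrix.det_fin_two, Matrix.charmatrix_apply, A2]; ring
  · simp [Matrix.charpoly, Matrix.det_fin_two, Matrix.charmatrix_apply, A3]; ring
  · rintro ⟨B, hB⟩
    have hinv : ((B⁻¹ : GL (Fin 2) ℤ) : Matrix (Fin 2) (Fin 2) ℤ) *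
        (B : Matrix (Fin 2) (Fin 2) ℤ) = 1 := by exact_mod_cast B.inv_mul
    have h1 : A3 * (B : Matrix (Fin 2) (Fin 2) ℤ) = (B : Matrix (Fin 2) (Fin 2) ℤ) * A2 := by
      rw [hB, Matrix.mul_assoc, hinv, Matrix.mul_one]
    have hd : IsUnit (B : Matrix (Fin 2) (Fin 2) ℤ).det :=
      (Matrix.isUnit_iff_isUnit_det _).mp B.isUnit
    have hd1 : (B : Matrix (Fin 2) (Fin 2) ℤ).det = 1 ∨ (B : Matrix (Fin 2) (Fin 2) ℤ).det = -1 :=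
      Int.isUnit_iff.mp hd
    set M := (B : Matrix (Fin 2) (Fin 2) ℤ) with hM
    have e00 : (A3 * M) 0 0 = (M * A2) 0 0 := by rw [h1]
    have e01 : (A3 * M) 0 1 = (M * A2) 0 1 := by rw [h1]
    have hdet : M.det = M 0 0 * M 1 1 - M 0 1 * M 1 0 := Matrix.det_fin_two M
    simp [Matrix.mul_apply, Fin.sum_univ_two, A2, A3] at e00 e01
    have h2 : M 1 0 = 2 * M 0 1 := by omega
    have h3 : M 1 1 = 2 * M 0 0 - 4 * M 0 1 := by omega
    have hdvd : (2 : ℤ) ∣ M.det := ⟨M 0 0 * M 0 0 - 2 * M 0 0 * M 0 1 - M 0 1 * M 0 1, by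
      rw [hdet, h2, h3]; ring⟩
    omega
  · constructor
    intro e
    obtain ⟨e2⟩ := coker2
    obtain ⟨e3⟩ := coker3
    have g : (ZMod 2 × ZMod 2) ≃+ ZMod 4 := (e2.symm.trans e).trans e3
    set x := g.symm 1 with hx
    have hxx : x + x = 0 := by
      have : ∀ a : ZMod 2, a + a = 0 := by decide
      exact Prod.ext (this x.1) (this x.2)
    have : (1 : ZMod 4) + 1 = 0 := by
      have := congrArg g hxx
      simpa [map_add, hx, AddEquiv.apply_symm_apply] using this
    exact absurd this (by decide)
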